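/- arXiv:2212.12802 — 2 statements merged into one kernel-verified Lean document; each statement's English description precedes it below -/
import Mathlib

section
/- If a distribution P over {0,1}^n is ε-far (in Hamming earth mover's distance) from every distribution supported on a subset of a set Π ⊆ {0,1}^n, then the probability that a sample x drawn from P has relative Hamming distance at least ε/2 from Π is at least ε/2. -/
/-!
Send every point to a nearest point of `A`. This transports `P` to a distribution `Q`
supported on `A` at cost `𝔼ₓ dist(x, A)`. Points within `ε/2` of `A` contribute at most `ε/2`
to this cost, the remaining ones at most their mass, since relative Hamming distances are
at most `1`. Hence `ε < emd P Q ≤ P(far points) + ε/2`.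
-/

open Finset
open scoped Classical

noncomputable section

/-- A probability distribution on a finite type, given as a mass function. -/
def IsDist {α : Type*} [Fintype α] (P : α → ℝ) : Prop :=
  (∀ x, 0 ≤ P x) ∧ ∑ x, P x = 1

/-- A coupling of two mass functions. -/
def IsCoupling {α : Type*} [Fintype α] (P Q : α → ℝ) (W : α → α → ℝ) : Prop :=
  (∀ x y, 0 ≤ W x y) ∧ (∀ x, ∑ y, W x y = P x) ∧ (∀ y, ∑ x, W x y = Q y)

/-- Earth mover's distance with respect to a cost function `d`. -/
def emd {α : Type*} [Fintype α] (d : α → α → ℝ) (P Q : α → ℝ) : ℝ :=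
  sInf {c : ℝ | ∃ W, IsCoupling P Q W ∧ c = ∑ x, ∑ y, W x y * d x y}

/-- Total variation distance. -/
def tv {α : Type*} [Fintype α] (P Q : α → ℝ) : ℝ :=
  (∑ x, |P x - Q x|) / 2

/-- Relative Hamming distance on `n`-bit strings. -/
def relHamming {n : ℕ} (x y : Fin n → Bool) : ℝ :=
  (hammingDist x y : ℝ) / n

/-- Support size of a mass function. -/
def suppCard {α : Type*} [Fintype α] (P : α → ℝ) : ℕ :=
  (univ.filter fun x => P x ≠ 0).card

/-- Pushforward of a mass function along a map. -/
def push {α β : Type*} [Fintype α] (f : α → β) (P : α → ℝ) : β → ℝ :=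
  fun y => ∑ x ∈ univ.filter (fun x => f x = y), P x

section Transport

variable {α : Type*} [Fintype α]

theorem IsDist.push {P : α → ℝ} (hP : IsDist P) (f : α → α) : IsDist (push f P) := by
  refine ⟨fun y => sum_nonneg fun x _ => hP.1 x, ?_⟩
  rw [← hP.2]
  exact sum_fiberwise univ f P

theorem mem_range_of_push_ne_zero {f : α → α} {P : α → ℝ} {y : α} (hy : push f P y ≠ 0) :
    ∃ x, f x = y := by
  by_contra! h
  exact hy (sum_eq_zero fun x hx => absurd (mem_filter.1 hx).2 (h x))

theorem isCoupling_graph {P : α → ℝ} (hP : ∀ x, 0 ≤ P x) (f : α → α) :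
    IsCoupling P (push f P) (fun x y => if y = f x then P x else 0) := by
  refine ⟨fun x y => ?_, fun x => by simp, fun y => ?_⟩
  · exact ite_nonneg (hP x) le_rfl
  · rw [push, sum_filter]
    exact sum_congr rfl fun x _ => by simp [eq_comm]

theorem emd_push_le {d : α → α → ℝ} (hd : ∀ x y, 0 ≤ d x y) {P : α → ℝ} (hP : ∀ x, 0 ≤ P x)
    (f : α → α) : emd d P (push f P) ≤ ∑ x, P x * d x (f x) := by
  refine csInf_le ⟨0, ?_⟩ ⟨_, isCoupling_graph hP f, ?_⟩
  · rintro c ⟨W, hW, rfl⟩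
    exact sum_nonneg fun x _ => sum_nonneg fun y _ => mul_nonneg (hW.1 x y) (hd x y)
  · exact sum_congr rfl fun x _ => by simp [ite_mul]

theorem IsDist.sum_le_one {P : α → ℝ} (hP : IsDist P) (s : Finset α) : ∑ x ∈ s, P x ≤ 1 :=
  hP.2 ▸ sum_le_sum_of_subset_of_nonneg (subset_univ s) fun x _ _ => hP.1 x

theorem sum_mul_le_sum_filter_add {P c : α → ℝ} (hP : IsDist P) (hc : ∀ x, c x ≤ 1)
    (p : α → Prop) [DecidablePred p] {δ : ℝ} (hδ : 0 ≤ δ) (hcδ : ∀ x, ¬ p x → c x ≤ δ) :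
    ∑ x, P x * c x ≤ ∑ x ∈ univ.filter p, P x + δ := by
  have hfar : ∑ x ∈ univ.filter p, P x * c x ≤ ∑ x ∈ univ.filter p, P x :=
    sum_le_sum fun x _ => mul_le_of_le_one_right (hP.1 x) (hc x)
  have hnear : ∑ x ∈ univ.filter (¬ p ·), P x * c x ≤ δ :=
    calc ∑ x ∈ univ.filter (¬ p ·), P x * c x
        ≤ ∑ x ∈ univ.filter (¬ p ·), P x * δ :=
          sum_le_sum fun x hx => mul_le_mul_of_nonneg_left (hcδ x (mem_filter.1 hx).2) (hP.1 x)
      _ = (∑ x ∈ univ.filter (¬ p ·), P x) * δ := (sum_mul _ _ _).symm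
      _ ≤ δ := mul_le_of_le_one_left hδ (hP.sum_le_one _)
  rw [← sum_filter_add_sum_filter_not univ p]
  linarith

theorem exists_dist_supported_emd_le [DecidableEq α] {d : α → α → ℝ} (hd₀ : ∀ x y, 0 ≤ d x y)
    (hd₁ : ∀ x y, d x y ≤ 1) {P : α → ℝ} (hP : IsDist P) {A : Finset α} (hA : A.Nonempty)
    {δ : ℝ} (hδ : 0 ≤ δ) :
    ∃ Q, IsDist Q ∧ (∀ x, Q x ≠ 0 → x ∈ A) ∧
      emd d P Q ≤ ∑ x ∈ univ.filter (fun x => ∀ y ∈ A, δ ≤ d x y), P x + δ := by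
  choose f hfA hf using fun x => A.exists_min_image (d x) hA
  refine ⟨push f P, hP.push f, fun y hy => ?_, (emd_push_le hd₀ hP.1 f).trans ?_⟩
  · obtain ⟨x, rfl⟩ := mem_range_of_push_ne_zero hy
    exact hfA x
  · refine sum_mul_le_sum_filter_add hP (fun x => hd₁ x (f x)) _ hδ fun x hx => ?_
    push Not at hx
    obtain ⟨y, hyA, hy⟩ := hx
    exact (hf x y hyA).trans hy.le

end Transport

theorem relHamming_nonneg {n : ℕ} (x y : Fin n → Bool) : 0 ≤ relHamming x y := by
  unfold relHamming
  positivity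

theorem relHamming_le_one {n : ℕ} (x y : Fin n → Bool) : relHamming x y ≤ 1 := by
  refine div_le_one_of_le₀ ?_ (Nat.cast_nonneg n)
  exact_mod_cast hammingDist_le_card_fintype.trans_eq (Fintype.card_fin n)

theorem far_sample_far_from_set_general {n : ℕ} (ε : ℝ)
    (P : (Fin n → Bool) → ℝ) (hP : IsDist P)
    (A : Finset (Fin n → Bool)) (hA : A.Nonempty)
    (hfar : ∀ Q : (Fin n → Bool) → ℝ, IsDist Q → (∀ x, Q x ≠ 0 → x ∈ A) →
      ε < emd relHamming P Q) :
    ε / 2 ≤ ∑ x ∈ univ.filter (fun x => ∀ y ∈ A, ε / 2 ≤ relHamming x y), P x := by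
  rcases le_or_gt ε 0 with hε | hε
  · exact (div_nonpos_of_nonpos_of_nonneg hε zero_le_two).trans (sum_nonneg fun x _ => hP.1 x)
  obtain ⟨Q, hQ, hQA, hemd⟩ := exists_dist_supported_emd_le relHamming_nonneg relHamming_le_one
    hP hA (half_pos hε).le
  linarith [hfar Q hQ hQA]

/-- if `P` is ε-far (in Hamming EMD) from every distribution supported in `A`,
then with probability at least ε/2 a sample from `P` is (ε/2)-H-far from `A`. -/
theorem far_sample_far_from_set {n : ℕ} (hn : 0 < n) (ε : ℝ)
    (P : (Fin n → Bool) → ℝ) (hP : IsDist P)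
    (A : Finset (Fin n → Bool)) (hA : A.Nonempty)
    (hfar : ∀ Q : (Fin n → Bool) → ℝ, IsDist Q → (∀ x, Q x ≠ 0 → x ∈ A) →
      ε < emd relHamming P Q) :
    ε / 2 ≤ ∑ x ∈ univ.filter (fun x => ∀ y ∈ A, ε / 2 ≤ relHamming x y), P x :=
  far_sample_far_from_set_general ε P hP A hA hfar
end
end

section
/- Let m ≤ 2^{cn} for a constant c < 1 chosen so that the Hamming ball of relative radius ε around any set of m strings covers at most half of {0,1}^n (this holds whenever H₂(ε) + c < 1, where H₂ is the binary entropy function). Then the uniform distribution over {0,1}^n is at Hamming earth mover's distance at least ε/2 from every distribution over {0,1}^n with support size at most m. -/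
open Finset
open scoped Classical

noncomputable section

/-!
Every unit of mass sitting at a point `x` farther than `ε` from the support of `Q` must travel
more than `ε` under any coupling, so the transport cost is at least `ε` times the mass of such
points. For the uniform distribution that mass is the fraction of `{0,1}^n` outside the
`ε`-Hamming ball around the support of `Q`, which is at least `1/2` by the covering hypothesis.
-/

section

variable {α : Type*} [Fintype α] {P Q : α → ℝ} {W : α → α → ℝ}

theorem isDist_uniform [Nonempty α] : IsDist fun _ : α => (1 : ℝ) / Fintype.card α := by
  refine ⟨fun _ => by positivity, ?_⟩
  rw [sum_const, card_univ, nsmul_eq_mul]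
  field_simp

theorem IsDist.isCoupling_mul (hP : IsDist P) (hQ : IsDist Q) :
    IsCoupling P Q fun x y => P x * Q y :=
  ⟨fun x y => mul_nonneg (hP.1 x) (hQ.1 y),
    fun x => by rw [← mul_sum, hQ.2, mul_one],
    fun y => by rw [← sum_mul, hP.2, one_mul]⟩

theorem IsCoupling.eq_zero_of_right_eq_zero (hW : IsCoupling P Q W) {y : α} (hy : Q y = 0)
    (x : α) : W x y = 0 :=
  (sum_eq_zero_iff_of_nonneg fun x' _ => hW.1 x' y).mp (by rw [hW.2.2 y, hy]) x (mem_univ x)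

theorem le_emd_of_forall_isCoupling {d : α → α → ℝ} {b : ℝ} (hPQ : ∃ W, IsCoupling P Q W)
    (hb : ∀ W, IsCoupling P Q W → b ≤ ∑ x, ∑ y, W x y * d x y) : b ≤ emd d P Q := by
  obtain ⟨W, hW⟩ := hPQ
  refine le_csInf ⟨_, W, hW, rfl⟩ ?_
  rintro _ ⟨W', hW', rfl⟩
  exact hb W' hW'

theorem IsCoupling.mul_sum_le_cost (hW : IsCoupling P Q W) {d : α → α → ℝ}
    (hd : ∀ x y, 0 ≤ d x y) {T : Finset α} {ε : ℝ}
    (hT : ∀ x ∈ T, ∀ y, Q y ≠ 0 → ε ≤ d x y) :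
    ε * ∑ x ∈ T, P x ≤ ∑ x, ∑ y, W x y * d x y := by
  have hrow : ∀ x ∈ T, ε * P x ≤ ∑ y, W x y * d x y := by
    intro x hx
    rw [← hW.2.1 x, mul_sum]
    refine sum_le_sum fun y _ => ?_
    by_cases hy : Q y = 0
    · simp [hW.eq_zero_of_right_eq_zero hy x]
    · rw [mul_comm]
      exact mul_le_mul_of_nonneg_left (hT x hx y hy) (hW.1 x y)
  calc ε * ∑ x ∈ T, P x = ∑ x ∈ T, ε * P x := mul_sum _ _ _
    _ ≤ ∑ x ∈ T, ∑ y, W x y * d x y := sum_le_sum hrow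
    _ ≤ ∑ x, ∑ y, W x y * d x y :=
      sum_le_sum_of_subset_of_nonneg (subset_univ T) fun x _ _ =>
        sum_nonneg fun y _ => mul_nonneg (hW.1 x y) (hd x y)

theorem mul_sum_le_emd_of_far_from_support (hP : IsDist P) (hQ : IsDist Q)
    {d : α → α → ℝ} (hd : ∀ x y, 0 ≤ d x y) {T : Finset α} {ε : ℝ}
    (hT : ∀ x ∈ T, ∀ y, Q y ≠ 0 → ε ≤ d x y) :
    ε * ∑ x ∈ T, P x ≤ emd d P Q :=
  le_emd_of_forall_isCoupling ⟨_, hP.isCoupling_mul hQ⟩ fun _ hW => hW.mul_sum_le_cost hd hT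

theorem one_half_le_sum_compl_uniform [Nonempty α] [DecidableEq α] {B : Finset α}
    (hB : 2 * #B ≤ Fintype.card α) : 1 / 2 ≤ ∑ _x ∈ Bᶜ, (1 : ℝ) / Fintype.card α := by
  have hpos : (0 : ℝ) < Fintype.card α := by exact_mod_cast Fintype.card_pos
  have hB' : (2 * #B : ℝ) ≤ Fintype.card α := by exact_mod_cast hB
  rw [sum_const, nsmul_eq_mul, card_compl, Nat.cast_sub (card_le_univ B), mul_one_div,
    le_div_iff₀ hpos]
  linarith

end

theorem uniform_far_from_small_support_general {n m : ℕ} (ε : ℝ)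
    (hcover : ∀ S : Finset (Fin n → Bool), S.card ≤ m →
      2 * (univ.filter (fun x : Fin n → Bool => ∃ s ∈ S, relHamming x s ≤ ε)).card ≤ 2 ^ n) :
    ∀ Q : (Fin n → Bool) → ℝ, IsDist Q → suppCard Q ≤ m →
      ε / 2 ≤ emd relHamming (fun _ => (1 : ℝ) / 2 ^ n) Q := by
  intro Q hQ hsupp
  set S := univ.filter fun y => Q y ≠ 0
  set B := univ.filter fun x => ∃ s ∈ S, relHamming x s ≤ ε
  have hB : 2 * #B ≤ Fintype.card (Fin n → Bool) := by
    rw [Fintype.card_fun, Fintype.card_bool, Fintype.card_fin]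
    exact hcover S hsupp
  have hcard : (2 : ℝ) ^ n = Fintype.card (Fin n → Bool) := by simp
  -- `max ε 0` rather than `ε`, so that the argument also covers `ε < 0`.
  have hfar : ∀ x ∈ Bᶜ, ∀ y, Q y ≠ 0 → max ε 0 ≤ relHamming x y := by
    intro x hx y hy
    have hxy : ¬ relHamming x y ≤ ε := fun h =>
      mem_compl.mp hx (mem_filter.mpr ⟨mem_univ x, y, mem_filter.mpr ⟨mem_univ y, hy⟩, h⟩)
    exact max_le (le_of_not_ge hxy) (relHamming_nonneg x y)
  calc ε / 2 ≤ max ε 0 * (1 / 2) := by linarith [le_max_left ε 0]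
    _ ≤ max ε 0 * ∑ _x ∈ Bᶜ, (1 : ℝ) / Fintype.card (Fin n → Bool) :=
      mul_le_mul_of_nonneg_left (one_half_le_sum_compl_uniform hB) (le_max_right ε 0)
    _ ≤ emd relHamming (fun _ => (1 : ℝ) / 2 ^ n) Q := by
      rw [hcard]
      exact mul_sum_le_emd_of_far_from_support isDist_uniform hQ relHamming_nonneg hfar

/-- if Hamming balls of relative radius ε around any `m` strings cover at most
half of `{0,1}^n`, then the uniform distribution is at Hamming EMD at least `ε/2` from every
distribution with support size at most `m`. -/
theorem uniform_far_from_small_support {n m : ℕ} (hn : 0 < n) (c ε : ℝ) (hc : c < 1)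
    (hm : (m : ℝ) ≤ 2 ^ (c * n))
    (hcover : ∀ S : Finset (Fin n → Bool), S.card ≤ m →
      2 * (univ.filter (fun x : Fin n → Bool => ∃ s ∈ S, relHamming x s ≤ ε)).card ≤ 2 ^ n) :
    ∀ Q : (Fin n → Bool) → ℝ, IsDist Q → suppCard Q ≤ m →
      ε / 2 ≤ emd relHamming (fun _ => (1 : ℝ) / 2 ^ n) Q :=
  uniform_far_from_small_support_general ε hcover
end
end
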